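/- arXiv:2012.12214 — 7 statements merged into one kernel-verified Lean document; each statement's English description precedes it below -/
import Mathlib

section
/- Let c ∈ ℂ and r > 0. The map from the open disc Metric.ball c r to the Banach space C(Metric.sphere c r, ℂ) of continuous complex-valued functions on the circle {z : |z − c| = r} (with the supremum norm), which sends w to the function z ↦ (z − w)⁻¹, is complex-analytic at every point of Metric.ball c r. -/
namespace Stmt0Aux

variable (c : ℂ) (r : ℝ)

noncomputable abbrev A := C(Metric.sphere c r, ℂ)

/-- For `w` in the ball, the pointwise inverse map, continuous. -/
noncomputable def invMap (w : ℂ) (h : dist w c < r) : A c r :=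
  ContinuousMap.mk (fun z : Metric.sphere c r => ((z : ℂ) - w)⁻¹)
    (by
      refine Continuous.inv₀ (continuous_subtype_val.sub continuous_const) fun z => ?_
      refine sub_ne_zero.mpr fun hz => ?_
      have hz' : dist w c = r := by rw [← hz]; exact z.2
      exact absurd hz' (ne_of_lt h))

lemma sub_ne (w : ℂ) (h : dist w c < r) (z : Metric.sphere c r) : (z : ℂ) - w ≠ 0 := by
  refine sub_ne_zero.mpr fun hz => ?_
  have hz' : dist w c = r := by rw [← hz]; exact z.2
  exact absurd hz' (ne_of_lt h)

/-- The element `z ↦ z` of the algebra. -/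
noncomputable def g : A c r := ContinuousMap.mk (fun z => (z : ℂ)) continuous_subtype_val

/-- The unit with inverse `invMap`. -/
noncomputable def unitAux (w : ℂ) (h : dist w c < r) : (A c r)ˣ where
  val := g c r - algebraMap ℂ (A c r) w
  inv := invMap c r w h
  val_inv := by
    ext z
    simp [g, invMap]
    exact mul_inv_cancel₀ (sub_ne c r w h z)
  inv_val := by
    ext z
    simp [g, invMap]
    exact inv_mul_cancel₀ (sub_ne c r w h z)

lemma ringInverse_eq (w : ℂ) (h : dist w c < r) :
    Ring.inverse (g c r - algebraMap ℂ (A c r) w) = invMap c r w h :=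
  Ring.inverse_unit (unitAux c r w h)

end Stmt0Aux

open Stmt0Aux in
/-- The map from the open disc `Metric.ball c r` to the Banach space
`C(Metric.sphere c r, ℂ)` sending `w` to the function `z ↦ (z - w)⁻¹`
is complex-analytic at every point of the ball. (Outside the ball the
map is extended by the junk value `0`.) -/
theorem stmt_0 (c : ℂ) (r : ℝ) (hr : 0 < r) (w₀ : ℂ) (hw₀ : w₀ ∈ Metric.ball c r) :
    AnalyticAt ℂ
      (fun w : ℂ =>
        if h : dist w c < r then
          ContinuousMap.mk (fun z : Metric.sphere c r => ((z : ℂ) - w)⁻¹)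
            (by
              refine Continuous.inv₀ (continuous_subtype_val.sub continuous_const) fun z => ?_
              refine sub_ne_zero.mpr fun hz => ?_
              have hz' : dist w c = r := by rw [← hz]; exact z.2
              exact absurd hz' (ne_of_lt h))
        else 0)
      w₀ := by
  have hw₀' : dist w₀ c < r := Metric.mem_ball.mp hw₀
  have h1 : AnalyticAt ℂ (fun w : ℂ => Ring.inverse (g c r - algebraMap ℂ (A c r) w)) w₀ := by
    have haff : AnalyticAt ℂ (fun w : ℂ => g c r - algebraMap ℂ (A c r) w) w₀ :=
      analyticAt_const.sub ((algebraMapCLM ℂ (A c r)).analyticAt w₀)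
    have hinv : AnalyticAt ℂ (Ring.inverse : A c r → A c r)
        (g c r - algebraMap ℂ (A c r) w₀) :=
      analyticAt_inverse (unitAux c r w₀ hw₀')
    exact AnalyticAt.comp (g := (Ring.inverse : A c r → A c r))
      (f := fun w : ℂ => g c r - algebraMap ℂ (A c r) w) hinv haff
  refine h1.congr ?_
  have : Metric.ball c r ∈ nhds w₀ := Metric.isOpen_ball.mem_nhds hw₀
  filter_upwards [this] with w hw
  have hw' : dist w c < r := Metric.mem_ball.mp hw
  rw [dif_pos hw', ringInverse_eq c r w hw']
  rfl
end

section
/- Let n ≥ 1, c : Fin n → ℂ and r : Fin n → ℝ with r i > 0 for all i. Let T = {z : Fin n → ℂ | ∀ i, |z i − c i| = r i} (a compact subset of ℂⁿ) and let C(T, ℂ) be the Banach space of continuous complex-valued functions on T with the supremum norm. Then the map from the open polydisc {w : Fin n → ℂ | ∀ i, |w i − c i| < r i} to C(T, ℂ) sending w to the function z ↦ Π_{i} (z i − w i)⁻¹ is complex-analytic at every point of the open polydisc. -/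
/-- The distinguished boundary torus `T = {z : Fin n → ℂ | ∀ i, |z i - c i| = r i}`. -/
def polyTorus (n : ℕ) (c : Fin n → ℂ) (r : Fin n → ℝ) : Set (Fin n → ℂ) :=
  {z | ∀ i, ‖z i - c i‖ = r i}

instance polyTorus.compactSpace (n : ℕ) (c : Fin n → ℂ) (r : Fin n → ℝ) :
    CompactSpace (polyTorus n c r) := by
  rw [← isCompact_iff_compactSpace]
  have h : polyTorus n c r = Set.pi Set.univ (fun i => Metric.sphere (c i) (r i)) := by
    ext z
    simp [polyTorus, Set.mem_pi, Metric.mem_sphere, Complex.dist_eq]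
  rw [h]
  exact isCompact_univ_pi fun i => isCompact_sphere _ _

/-! Each factor `w ↦ (z_i - w_i)⁻¹` is the inverse, in the Banach algebra `C(T, ℂ)`, of an
affine function of `w`, namely the coordinate `z ↦ z_i` minus the constant `w_i`. On the open
polydisc these elements never vanish on `T`, hence are units, and inversion in a Banach algebra is
analytic at units; a finite product of analytic maps is analytic. -/

theorem analyticAt_prod_ringInverse_sub_smul_one {𝕜 A ι : Type*} [NontriviallyNormedField 𝕜]
    [NormedCommRing A] [NormedAlgebra 𝕜 A] [HasSummableGeomSeries A] [Fintype ι]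
    (g : ι → A) {w₀ : ι → 𝕜} (h : ∀ i, IsUnit (g i - w₀ i • (1 : A))) :
    AnalyticAt 𝕜 (fun w : ι → 𝕜 => ∏ i, Ring.inverse (g i - w i • (1 : A))) w₀ := by
  refine Finset.analyticAt_fun_prod _ fun i _ => ?_
  obtain ⟨u, hu⟩ := h i
  have hinv : AnalyticAt 𝕜 Ring.inverse (g i - w₀ i • (1 : A)) := hu ▸ analyticAt_inverse u
  have haffine : AnalyticAt 𝕜 (fun w : ι → 𝕜 => g i - w i • (1 : A)) w₀ :=
    analyticAt_const.sub <|
      ((ContinuousLinearMap.proj (R := 𝕜) (φ := fun _ : ι => 𝕜) i).analyticAt w₀).fun_smul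
        analyticAt_const
  exact hinv.comp_of_eq haffine rfl

theorem ContinuousMap.ringInverse_apply {X R : Type*} [TopologicalSpace X] [NormedDivisionRing R]
    [CompleteSpace R] {f : C(X, R)} (hf : ∀ x, f x ≠ 0) (x : X) :
    Ring.inverse f x = (f x)⁻¹ := by
  obtain ⟨u, rfl⟩ := (f.isUnit_iff_forall_ne_zero).2 hf
  rw [Ring.inverse_unit]
  exact eq_inv_of_mul_eq_one_left (ContinuousMap.congr_fun u.inv_mul x)

theorem isOpen_setOf_forall_norm_sub_lt {ι E : Type*} [Finite ι] [SeminormedAddCommGroup E]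
    (c : ι → E) (r : ι → ℝ) : IsOpen {w : ι → E | ∀ i, ‖w i - c i‖ < r i} := by
  simp only [Set.ofPred_forall]
  exact isOpen_iInter_of_finite fun i => isOpen_lt (by fun_prop) continuous_const

theorem sub_ne_zero_of_mem_polyTorus {n : ℕ} {c : Fin n → ℂ} {r : Fin n → ℝ} {w : Fin n → ℂ}
    (hw : ∀ i, ‖w i - c i‖ < r i) {z : Fin n → ℂ} (hz : z ∈ polyTorus n c r) (i : Fin n) :
    z i - w i ≠ 0 :=
  sub_ne_zero.2 fun h => (hw i).ne (h ▸ hz i)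

/-- The map from the open polydisc `{w : Fin n → ℂ | ∀ i, |w i - c i| < r i}` to the
Banach space `C(T, ℂ)` of continuous functions on the distinguished boundary torus,
sending `w` to `z ↦ ∏ i, (z i - w i)⁻¹`, is complex-analytic at every point of the
polydisc. (Outside the polydisc the map is extended by the junk value `0`.) -/
theorem stmt_3 (n : ℕ) (c : Fin n → ℂ) (r : Fin n → ℝ)
    (w₀ : Fin n → ℂ) (hw₀ : ∀ i, ‖w₀ i - c i‖ < r i) :
    AnalyticAt ℂ
      (fun w : Fin n → ℂ =>
        if h : ∀ i, ‖w i - c i‖ < r i then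
          ContinuousMap.mk
            (fun z : polyTorus n c r => ∏ i, (((z : Fin n → ℂ) i) - w i)⁻¹)
            (by
              refine continuous_finset_prod _ fun i _ => ?_
              refine Continuous.inv₀
                (((continuous_apply i).comp continuous_subtype_val).sub continuous_const)
                fun z => sub_ne_zero.mpr fun hz => ?_
              have hz' : ‖w i - c i‖ = r i := by rw [← hz]; exact z.2 i
              exact absurd hz' (ne_of_lt (h i)))
        else 0)
      w₀ := by
  let coord (i : Fin n) : C(polyTorus n c r, ℂ) :=
    ⟨fun z => (z : Fin n → ℂ) i, (continuous_apply i).comp continuous_subtype_val⟩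
  have hne {w : Fin n → ℂ} (hw : ∀ i, ‖w i - c i‖ < r i) (i : Fin n) (z : polyTorus n c r) :
      (coord i - w i • 1) z ≠ 0 := by
    simpa [coord] using sub_ne_zero_of_mem_polyTorus hw z.2 i
  refine (analyticAt_prod_ringInverse_sub_smul_one coord fun i =>
    (ContinuousMap.isUnit_iff_forall_ne_zero _).2 (hne hw₀ i)).congr ?_
  filter_upwards [(isOpen_setOf_forall_norm_sub_lt c r).mem_nhds hw₀] with w hw
  rw [dif_pos hw]
  ext z
  simp only [ContinuousMap.prod_apply, ContinuousMap.ringInverse_apply (hne hw _)]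
  simp [coord]
end

section
/- Let c ∈ ℂ and R > 0. For w ∈ Metric.ball c R define Λ_w : C(Metric.sphere c R, ℂ) → ℂ by Λ_w(f) = (2πi)⁻¹ ∫_{θ ∈ [0, 2π]} f(c + R·e^{iθ}) · (c + R·e^{iθ} − w)⁻¹ · i·R·e^{iθ} dθ. Then each Λ_w is a bounded linear functional on C(Metric.sphere c R, ℂ), and the map w ↦ Λ_w from Metric.ball c R to the dual Banach space C(Metric.sphere c R, ℂ) →L[ℂ] ℂ (with the operator norm) is complex-analytic at every point of Metric.ball c R. -/
/-!
In the Banach algebra `C(K, ℂ)` of a compact `K ⊆ ℂ`, the coordinate function `ι z = z` has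
spectrum `K`, so for `w ∉ K` the kernel `z ↦ (z - w)⁻¹` is `-resolvent ι w`. The resolvent is
analytic on the resolvent set, since inversion is analytic at units of a Banach algebra.
Composing with the bounded bilinear map `(g, f) ↦ (2πi)⁻¹ ∮ g f` yields `w ↦ Λ_w` as an
analytic map into the dual.
-/

open Complex Metric Real

theorem analyticAt_resolvent {𝕜 A : Type*} [NontriviallyNormedField 𝕜] [NormedRing A]
    [NormedAlgebra 𝕜 A] [HasSummableGeomSeries A] {a : A} {k : 𝕜} (hk : k ∈ resolventSet 𝕜 a) :
    AnalyticAt 𝕜 (resolvent a) k := by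
  have hinv : AnalyticAt 𝕜 Ring.inverse (algebraMap 𝕜 A k - a) := by
    simpa only [IsUnit.unit_spec] using
      analyticAt_inverse (𝕜 := 𝕜) (spectrum.mem_resolventSet_iff.mp hk).unit
  exact hinv.comp (f := fun k => algebraMap 𝕜 A k - a)
    ((algebraMapCLM 𝕜 A).analyticAt k |>.sub analyticAt_const)

namespace ContinuousMap

variable {K : Set ℂ}

theorem mem_resolventSet_restrict_id {w : ℂ} (hw : w ∉ K) :
    w ∈ resolventSet ℂ ((ContinuousMap.id ℂ).restrict K) := by
  have : w ∉ spectrum ℂ ((ContinuousMap.id ℂ).restrict K) := by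
    simpa [spectrum_eq_range] using hw
  simpa [spectrum] using this

variable (K) in
noncomputable def cauchyKernel (w : ℂ) : C(K, ℂ) :=
  -resolvent ((ContinuousMap.id ℂ).restrict K) w

theorem cauchyKernel_apply {w : ℂ} (hw : w ∉ K) (z : K) :
    cauchyKernel K w z = ((z : ℂ) - w)⁻¹ := by
  have hunit := spectrum.mem_resolventSet_iff.mp (mem_resolventSet_restrict_id hw)
  have hmul := congr($(Ring.inverse_mul_cancel _ hunit) z)
  simp only [mul_apply, sub_apply, algebraMap_apply, one_apply, restrict_apply, id_apply,
    smul_eq_mul, mul_one] at hmul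
  rw [cauchyKernel, neg_apply, resolvent, eq_inv_of_mul_eq_one_left hmul, ← inv_neg, neg_sub]

theorem analyticAt_cauchyKernel [CompactSpace K] {w : ℂ} (hw : w ∉ K) :
    AnalyticAt ℂ (cauchyKernel K) w :=
  (analyticAt_resolvent (mem_resolventSet_restrict_id hw)).neg

variable [CompactSpace K] {E : Type*} [NormedAddCommGroup E] [NormedSpace ℂ E]

noncomputable def cauchyTransform (J : C(K, ℂ) →L[ℂ] E) (w : ℂ) : C(K, ℂ) →L[ℂ] E :=
  J ∘L ContinuousLinearMap.mul ℂ _ (cauchyKernel K w)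

theorem cauchyTransform_apply (J : C(K, ℂ) →L[ℂ] E) (w : ℂ) (f : C(K, ℂ)) :
    cauchyTransform J w f = J (cauchyKernel K w * f) :=
  rfl

theorem analyticAt_cauchyTransform (J : C(K, ℂ) →L[ℂ] E) {w : ℂ} (hw : w ∉ K) :
    AnalyticAt ℂ (cauchyTransform J) w := by
  let Φ : C(K, ℂ) →L[ℂ] C(K, ℂ) →L[ℂ] E :=
    ContinuousLinearMap.compL ℂ _ _ E J ∘L ContinuousLinearMap.mul ℂ _
  exact (ContinuousLinearMap.analyticAt (E := C(K, ℂ)) (F := C(K, ℂ) →L[ℂ] E) Φ _).comp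
    (analyticAt_cauchyKernel hw)

end ContinuousMap

section SphereContourIntegral

variable (c : ℂ) {R : ℝ} (hR : 0 ≤ R)

noncomputable def circleMapSphere : C(ℝ, sphere c R) :=
  ⟨fun θ => ⟨circleMap c R θ, circleMap_mem_sphere c hR θ⟩, by fun_prop⟩

theorem continuous_comp_circleMapSphere_mul_deriv (f : C(sphere c R, ℂ)) :
    Continuous fun θ => f (circleMapSphere c hR θ) * deriv (circleMap c R) θ := by
  simp only [deriv_circleMap]
  fun_prop

noncomputable def sphereContourIntegral : C(sphere c R, ℂ) →L[ℂ] ℂ :=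
  LinearMap.mkContinuous
    { toFun f := ∫ θ in 0..2 * π, f (circleMapSphere c hR θ) * deriv (circleMap c R) θ
      map_add' f g := by
        simp only [ContinuousMap.add_apply, add_mul]
        exact intervalIntegral.integral_add
          ((continuous_comp_circleMapSphere_mul_deriv c hR f).intervalIntegrable _ _)
          ((continuous_comp_circleMapSphere_mul_deriv c hR g).intervalIntegrable _ _)
      map_smul' a f := by
        simp only [ContinuousMap.smul_apply, smul_eq_mul, mul_assoc, RingHom.id_apply]
        exact intervalIntegral.integral_const_mul a _ }
    (2 * π * R) fun f => by
      have hbound : ∀ θ ∈ Set.uIoc 0 (2 * π),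
          ‖f (circleMapSphere c hR θ) * deriv (circleMap c R) θ‖ ≤ ‖f‖ * R := fun θ _ => by
        rw [norm_mul, deriv_circleMap, norm_mul, norm_circleMap_zero, norm_I, mul_one,
          abs_of_nonneg hR]
        gcongr
        exact f.norm_coe_le_norm _
      calc _ ≤ ‖f‖ * R * |2 * π - 0| := intervalIntegral.norm_integral_le_of_norm_le_const hbound
        _ = 2 * π * R * ‖f‖ := by rw [sub_zero, abs_of_pos two_pi_pos]; ring

theorem sphereContourIntegral_apply (f : C(sphere c R, ℂ)) :
    sphereContourIntegral c hR f =
      ∫ θ in 0..2 * π, f (circleMapSphere c hR θ) * deriv (circleMap c R) θ :=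
  rfl

end SphereContourIntegral

/-- For `w` in the open disc `Metric.ball c R`, the Cauchy-type functional
`Λ_w(f) = (2πi)⁻¹ ∫_{θ∈[0,2π]} f(c + R e^{iθ}) (c + R e^{iθ} - w)⁻¹ · iR e^{iθ} dθ`
is a bounded linear functional on `C(Metric.sphere c R, ℂ)`, and `w ↦ Λ_w` is
complex-analytic at every point of the ball. -/
theorem stmt_4 (c : ℂ) (R : ℝ) (hR : 0 < R) :
    ∃ L : ℂ → (C(Metric.sphere c R, ℂ) →L[ℂ] ℂ),
      (∀ w ∈ Metric.ball c R, ∀ f : C(Metric.sphere c R, ℂ),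
        L w f = (2 * (Real.pi : ℂ) * Complex.I)⁻¹ *
          ∫ θ in (0 : ℝ)..(2 * Real.pi),
            f ⟨c + (R : ℂ) * Complex.exp ((θ : ℂ) * Complex.I), by
              have habs : ‖(R : ℂ) * Complex.exp ((θ : ℂ) * Complex.I)‖ = R := by
                simp [abs_of_pos hR]
              simp [Metric.mem_sphere, Complex.dist_eq, add_sub_cancel_left, habs, hR.le]⟩ *
              (c + (R : ℂ) * Complex.exp ((θ : ℂ) * Complex.I) - w)⁻¹ *
              (Complex.I * (R : ℂ) * Complex.exp ((θ : ℂ) * Complex.I))) ∧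
      ∀ w ∈ Metric.ball c R, AnalyticAt ℂ L w := by
  have not_mem_sphere {w : ℂ} (hw : w ∈ ball c R) : w ∉ sphere c R := fun hs =>
    (mem_ball.mp hw).ne (mem_sphere.mp hs)
  let J := (2 * π * I : ℂ)⁻¹ • sphereContourIntegral c hR.le
  refine ⟨ContinuousMap.cauchyTransform J, fun w hw f => ?_, fun w hw =>
    ContinuousMap.analyticAt_cauchyTransform J (not_mem_sphere hw)⟩
  simp only [J, ContinuousMap.cauchyTransform_apply, smul_apply, smul_eq_mul,
    sphereContourIntegral_apply, ContinuousMap.mul_apply,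
    ContinuousMap.cauchyKernel_apply (not_mem_sphere hw)]
  congr 1
  refine intervalIntegral.integral_congr fun θ _ => ?_
  simp only [circleMapSphere, ContinuousMap.coe_mk, deriv_circleMap, circleMap, zero_add]
  ring
end

section
/- Let n ≥ 1, let U be an open subset of ℂⁿ (identified with Fin n → ℂ, carrying its Lebesgue volume measure), and let K ⊆ U be compact. Then there exists a constant C > 0 such that for every function f : ℂⁿ → ℂ that is complex-differentiable at every point of U and every z ∈ K, one has ‖f z‖² ≤ C · ∫_U ‖f w‖² dw (an inequality in [0, ∞], using the lower Lebesgue integral on the right). In particular, the supremum of ‖f‖ over K is bounded by C^{1/2} times the L²-norm of f on U. -/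
/-!
Closed balls of `Fin n → ℂ` are polydiscs, the norm being the sup norm. If `g` is holomorphic on a
closed polydisc, `‖g‖` at the centre is at most its mean over the polydisc: in one variable, the
Cauchy mean value property on each circle of radius `ρ ≤ r`, integrated against `ρ dρ` in polar
coordinates, gives the inequality for discs, and Fubini extends it one variable at a time.
By compactness, all polydiscs of some fixed radius centred on `K` lie in `U`; applying the mean
value inequality on them to `f ^ 2` gives the bound, with `C` the inverse volume of such a polydisc.
-/

open MeasureTheory Metric Set Real

theorem lintegral_circleMap_le_setLIntegral_closedBall {F : ℂ → ENNReal} {c : ℂ} {r : ℝ}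
    (hF : ContinuousOn F (closedBall c r)) :
    ∫⁻ ρ in Ioc 0 r, ∫⁻ θ in Ioo (-π) π, ENNReal.ofReal ρ * F (circleMap c ρ θ) ≤
      ∫⁻ w in closedBall c r, F w := by
  set S : Set (ℝ × ℝ) := Ioc 0 r ×ˢ Ioo (-π) π
  have hS : S ⊆ polarCoord.target := by
    rw [polarCoord_target]
    exact prod_mono Ioc_subset_Ioi_self subset_rfl
  have hcircle : ∀ p ∈ S, circleMap c p.1 p.2 ∈ closedBall c r := fun p hp ↦ by
    simpa [dist_eq_norm, circleMap_sub_center, abs_of_pos hp.1.1] using hp.1.2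
  have hmeas : AEMeasurable (fun p : ℝ × ℝ ↦ ENNReal.ofReal p.1 * F (circleMap c p.1 p.2))
      (volume.restrict S) := by
    refine (measurable_fst.ennreal_ofReal.aemeasurable).mul ?_
    exact (hF.comp (by fun_prop) hcircle).aemeasurable (measurableSet_Ioc.prod measurableSet_Ioo)
  calc ∫⁻ ρ in Ioc 0 r, ∫⁻ θ in Ioo (-π) π, ENNReal.ofReal ρ * F (circleMap c ρ θ)
      = ∫⁻ p in S, ENNReal.ofReal p.1 * F (circleMap c p.1 p.2) := by
        have hprod : volume.restrict S =
            (volume.restrict (Ioc 0 r)).prod (volume.restrict (Ioo (-π) π)) := by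
          rw [Measure.volume_eq_prod, Measure.prod_restrict]
        rw [hprod] at hmeas ⊢
        exact (lintegral_prod _ hmeas).symm
    _ = ∫⁻ p in S, ENNReal.ofReal p.1 •
          (closedBall (0 : ℂ) r).indicator (fun z ↦ F (c + z)) (Complex.polarCoord.symm p) := by
        refine setLIntegral_congr_fun (measurableSet_Ioc.prod measurableSet_Ioo) fun p hp ↦ ?_
        have hmem : Complex.polarCoord.symm p ∈ closedBall (0 : ℂ) r := by
          simpa [abs_of_pos hp.1.1] using hp.1.2
        have hcirc : c + Complex.polarCoord.symm p = circleMap c p.1 p.2 := by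
          simp [circleMap, Complex.polarCoord_symm_apply, Complex.exp_mul_I]
        rw [indicator_of_mem hmem, hcirc, smul_eq_mul]
    _ ≤ ∫⁻ p in polarCoord.target, ENNReal.ofReal p.1 •
          (closedBall (0 : ℂ) r).indicator (fun z ↦ F (c + z)) (Complex.polarCoord.symm p) :=
        lintegral_mono_set hS
    _ = ∫⁻ z, (closedBall (0 : ℂ) r).indicator (fun z ↦ F (c + z)) z :=
        Complex.lintegral_comp_polarCoord_symm _
    _ = ∫⁻ w in closedBall c r, F w := by
        rw [← lintegral_indicator measurableSet_closedBall,
          ← lintegral_add_left_eq_self ((closedBall c r).indicator F) c]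
        congr with z
        classical
        simp only [indicator_apply, mem_closedBall, dist_eq_norm, sub_zero, add_sub_cancel_left]

section FinCons

variable {α : Type*} [PseudoMetricSpace α] {n : ℕ}

theorem Fin.cons_mem_closedBall_iff {c : Fin (n + 1) → α} {r : ℝ} (hr : 0 ≤ r) (x : α)
    (y : Fin n → α) :
    (Fin.cons x y : Fin (n + 1) → α) ∈ closedBall c r ↔
      x ∈ closedBall (c 0) r ∧ y ∈ closedBall (Fin.tail c) r := by
  simp only [mem_closedBall, dist_pi_le_iff hr, Fin.forall_fin_succ, Fin.cons_zero,
    Fin.cons_succ, Fin.tail]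

variable [MeasureSpace α] [SigmaFinite (volume : Measure α)] [OpensMeasurableSpace α]
  [SecondCountableTopology α]

theorem setLIntegral_closedBall_eq_lintegral_finCons {F : (Fin (n + 1) → α) → ENNReal}
    {c : Fin (n + 1) → α} {r : ℝ} (hr : 0 ≤ r) (hF : ContinuousOn F (closedBall c r)) :
    ∫⁻ w in closedBall c r, F w =
      ∫⁻ x in closedBall (c 0) r, ∫⁻ y in closedBall (Fin.tail c) r, F (Fin.cons x y) := by
  let e := MeasurableEquiv.piFinSuccAbove (fun _ : Fin (n + 1) ↦ α) 0
  have he : ∀ p : α × (Fin n → α), e.symm p = Fin.cons p.1 p.2 := fun p ↦ by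
    simp [e, MeasurableEquiv.piFinSuccAbove_symm_apply, Fin.insertNthEquiv, Fin.insertNth_zero']
  have hpre : e.symm ⁻¹' closedBall c r = closedBall (c 0) r ×ˢ closedBall (Fin.tail c) r := by
    ext p
    simp only [mem_preimage, he, Fin.cons_mem_closedBall_iff hr, mem_prod]
  have hprod : volume.restrict (closedBall (c 0) r ×ˢ closedBall (Fin.tail c) r) =
      (volume.restrict (closedBall (c 0) r)).prod
        (volume.restrict (closedBall (Fin.tail c) r)) := by
    rw [Measure.volume_eq_prod, Measure.prod_restrict]
  have hmeas : AEMeasurable (fun p : α × (Fin n → α) ↦ F (Fin.cons p.1 p.2))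
      (volume.restrict (closedBall (c 0) r ×ˢ closedBall (Fin.tail c) r)) := by
    refine (hF.comp (by fun_prop) fun p hp ↦ ?_).aemeasurable
      (measurableSet_closedBall.prod measurableSet_closedBall)
    exact (Fin.cons_mem_closedBall_iff hr _ _).2 hp
  rw [← ((volume_preserving_piFinSuccAbove (fun _ ↦ α) 0).symm).setLIntegral_comp_preimage_emb
    e.symm.measurableEmbedding, hpre, hprod]
  rw [hprod] at hmeas
  simp only [e, he]
  exact lintegral_prod _ hmeas

end FinCons

section MeanValue

variable {E : Type*} [NormedAddCommGroup E] [NormedSpace ℂ E] [CompleteSpace E]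

theorem DiffContOnCl.ofReal_two_pi_mul_enorm_le_lintegral_circleMap {g : ℂ → E} {c : ℂ} {R : ℝ}
    (hg : DiffContOnCl ℂ g (ball c |R|)) :
    ENNReal.ofReal (2 * π) * ‖g c‖ₑ ≤ ∫⁻ θ in Ioo (-π) π, ‖g (circleMap c R θ)‖ₑ := by
  have hper : Function.Periodic (fun θ ↦ g (circleMap c R θ)) (2 * π) :=
    fun θ ↦ by simp only [periodic_circleMap c R θ]
  have hmean : ∫ θ in -π..π, g (circleMap c R θ) = (2 * π) • g c := by
    have := hper.intervalIntegral_add_eq 0 (-π)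
    rw [zero_add, show -π + 2 * π = π by ring] at this
    rw [← this, ← hg.circleAverage, circleAverage_def, smul_inv_smul₀ (by positivity)]
  calc ENNReal.ofReal (2 * π) * ‖g c‖ₑ = ‖∫ θ in -π..π, g (circleMap c R θ)‖ₑ := by
        rw [hmean, enorm_smul, Real.enorm_of_nonneg (by positivity)]
    _ ≤ ∫⁻ θ in Ioc (-π) π, ‖g (circleMap c R θ)‖ₑ := by
        rw [intervalIntegral.integral_of_le (by linarith [pi_pos])]
        exact enorm_integral_le_lintegral_enorm _
    _ = ∫⁻ θ in Ioo (-π) π, ‖g (circleMap c R θ)‖ₑ := setLIntegral_congr Ioo_ae_eq_Ioc.symm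

theorem DiffContOnCl.volume_closedBall_mul_enorm_le_setLIntegral {g : ℂ → E} {c : ℂ} {r : ℝ}
    (hr : 0 < r) (hg : DiffContOnCl ℂ g (ball c r)) :
    volume (closedBall c r) * ‖g c‖ₑ ≤ ∫⁻ w in closedBall c r, ‖g w‖ₑ := by
  have hcont : ContinuousOn (fun w ↦ ‖g w‖ₑ) (closedBall c r) := by
    simpa [closure_ball c hr.ne'] using hg.continuousOn.enorm
  have hradial : ∫⁻ ρ in Ioc 0 r, ENNReal.ofReal ρ = ENNReal.ofReal (r ^ 2 / 2) := by
    rw [← ofReal_integral_eq_lintegral_ofReal, ← intervalIntegral.integral_of_le hr.le,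
      integral_id]
    · ring_nf
    · exact continuous_id.integrableOn_Ioc
    · exact ae_restrict_of_forall_mem measurableSet_Ioc fun ρ hρ ↦ hρ.1.le
  calc volume (closedBall c r) * ‖g c‖ₑ
      = (∫⁻ ρ in Ioc 0 r, ENNReal.ofReal ρ) * (ENNReal.ofReal (2 * π) * ‖g c‖ₑ) := by
        rw [Complex.volume_closedBall, hradial, ← mul_assoc, ← ENNReal.ofReal_mul (by positivity),
          ← ENNReal.ofReal_pow hr.le, ← ENNReal.ofReal_coe_nnreal, NNReal.coe_real_pi,
          ← ENNReal.ofReal_mul (by positivity)]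
        ring_nf
    _ = ∫⁻ ρ in Ioc 0 r, ENNReal.ofReal ρ * (ENNReal.ofReal (2 * π) * ‖g c‖ₑ) :=
        (lintegral_mul_const' _ _ (ENNReal.mul_ne_top ENNReal.ofReal_ne_top enorm_ne_top)).symm
    _ ≤ ∫⁻ ρ in Ioc 0 r, ∫⁻ θ in Ioo (-π) π, ENNReal.ofReal ρ * ‖g (circleMap c ρ θ)‖ₑ := by
        refine setLIntegral_mono' measurableSet_Ioc fun ρ hρ ↦ ?_
        rw [lintegral_const_mul' _ _ ENNReal.ofReal_ne_top]
        gcongr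
        have hρr : |ρ| ≤ r := by simpa [abs_of_pos hρ.1] using hρ.2
        exact (hg.mono (ball_subset_ball hρr)).ofReal_two_pi_mul_enorm_le_lintegral_circleMap
    _ ≤ ∫⁻ w in closedBall c r, ‖g w‖ₑ := lintegral_circleMap_le_setLIntegral_closedBall hcont

theorem DifferentiableOn.volume_closedBall_mul_enorm_le_setLIntegral {n : ℕ}
    {g : (Fin n → ℂ) → E} {c : Fin n → ℂ} {r : ℝ} (hg : DifferentiableOn ℂ g (closedBall c r))
    (hr : 0 < r) :
    volume (closedBall c r) * ‖g c‖ₑ ≤ ∫⁻ w in closedBall c r, ‖g w‖ₑ := by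
  induction n with
  | zero =>
    have hball : closedBall c r = univ := eq_univ_of_forall fun w ↦ by
      simp [Subsingleton.elim w c, hr.le]
    simp [hball, Subsingleton.elim _ c, mul_comm]
  | succ n ih =>
    have hcons := Fin.cons_mem_closedBall_iff (c := c) hr.le
    have hslice : ∀ x ∈ closedBall (c 0) r,
        DifferentiableOn ℂ (fun y ↦ g (Fin.cons x y)) (closedBall (Fin.tail c) r) :=
      fun x hx ↦ hg.comp (by fun_prop) fun y hy ↦ (hcons x y).2 ⟨hx, hy⟩
    have hfirst : DifferentiableOn ℂ (fun x ↦ g (Fin.cons x (Fin.tail c))) (closedBall (c 0) r) :=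
      hg.comp (by fun_prop) fun x hx ↦ (hcons x _).2 ⟨hx, mem_closedBall_self hr.le⟩
    have hdisc :=
      (hfirst.diffContOnCl_ball subset_rfl).volume_closedBall_mul_enorm_le_setLIntegral hr
    rw [Fin.cons_self_tail] at hdisc
    have hvol : volume (closedBall c r) =
        volume (closedBall (c 0) r) * volume (closedBall (Fin.tail c) r) := by
      rw [MeasureTheory.volume_pi_closedBall _ hr.le, MeasureTheory.volume_pi_closedBall _ hr.le,
        Fin.prod_univ_succ]
      rfl
    calc volume (closedBall c r) * ‖g c‖ₑ
        = volume (closedBall (Fin.tail c) r) * (volume (closedBall (c 0) r) * ‖g c‖ₑ) := by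
          rw [hvol]; ring
      _ ≤ volume (closedBall (Fin.tail c) r) *
            ∫⁻ x in closedBall (c 0) r, ‖g (Fin.cons x (Fin.tail c))‖ₑ := by gcongr
      _ = ∫⁻ x in closedBall (c 0) r,
            volume (closedBall (Fin.tail c) r) * ‖g (Fin.cons x (Fin.tail c))‖ₑ :=
          (lintegral_const_mul' _ _ measure_closedBall_lt_top.ne).symm
      _ ≤ ∫⁻ x in closedBall (c 0) r, ∫⁻ y in closedBall (Fin.tail c) r, ‖g (Fin.cons x y)‖ₑ :=
          setLIntegral_mono' measurableSet_closedBall fun x hx ↦ ih (hslice x hx)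
      _ = ∫⁻ w in closedBall c r, ‖g w‖ₑ :=
          (setLIntegral_closedBall_eq_lintegral_finCons hr.le hg.continuousOn.enorm).symm

end MeanValue

theorem stmt_5_general (n : ℕ) (U : Set (Fin n → ℂ)) (hU : IsOpen U)
    (K : Set (Fin n → ℂ)) (hK : IsCompact K) (hKU : K ⊆ U) :
    ∃ C : ℝ, 0 < C ∧ ∀ f : (Fin n → ℂ) → ℂ,
      (∀ z ∈ U, DifferentiableAt ℂ f z) →
      ∀ z ∈ K,
        (‖f z‖₊ : ENNReal) ^ 2 ≤
          ENNReal.ofReal C * ∫⁻ w in U, (‖f w‖₊ : ENNReal) ^ 2 := by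
  obtain ⟨δ, hδ, hthick⟩ := hK.exists_thickening_subset_open hU hKU
  have hball : ∀ z ∈ K, closedBall z (δ / 2) ⊆ U := fun z hz ↦
    (closedBall_subset_ball (by linarith)).trans ((ball_subset_thickening hz δ).trans hthick)
  set V := volume (closedBall (0 : Fin n → ℂ) (δ / 2))
  have hV0 : V ≠ 0 := (measure_closedBall_pos _ _ (by positivity)).ne'
  have hVtop : V ≠ ⊤ := measure_closedBall_lt_top.ne
  refine ⟨V.toReal⁻¹, inv_pos.2 (ENNReal.toReal_pos hV0 hVtop), fun f hf z hz ↦ ?_⟩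
  have hsq : DifferentiableOn ℂ (fun w ↦ f w ^ 2) (closedBall z (δ / 2)) :=
    fun w hw ↦ ((hf w (hball z hz hw)).pow 2).differentiableWithinAt
  have hmean := hsq.volume_closedBall_mul_enorm_le_setLIntegral (by positivity)
  rw [Measure.addHaar_closedBall_center] at hmean
  simp only [enorm_eq_nnnorm, nnnorm_pow, ENNReal.coe_pow] at hmean
  rw [ENNReal.ofReal_inv_of_pos (ENNReal.toReal_pos hV0 hVtop), ENNReal.ofReal_toReal hVtop,
    ← ENNReal.div_eq_inv_mul, ENNReal.le_div_iff_mul_le (Or.inl hV0) (Or.inl hVtop), mul_comm]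
  exact hmean.trans (lintegral_mono_set (hball z hz))

/-- Bergman-type inequality: for `U ⊆ ℂⁿ` open and `K ⊆ U` compact there is a
constant `C > 0` such that every function holomorphic on `U` satisfies
`‖f z‖² ≤ C · ∫⁻_U ‖f‖²` for all `z ∈ K`. -/
theorem stmt_5 (n : ℕ) (hn : 1 ≤ n) (U : Set (Fin n → ℂ)) (hU : IsOpen U)
    (K : Set (Fin n → ℂ)) (hK : IsCompact K) (hKU : K ⊆ U) :
    ∃ C : ℝ, 0 < C ∧ ∀ f : (Fin n → ℂ) → ℂ,
      (∀ z ∈ U, DifferentiableAt ℂ f z) →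
      ∀ z ∈ K,
        (‖f z‖₊ : ENNReal) ^ 2 ≤
          ENNReal.ofReal C * ∫⁻ w in U, (‖f w‖₊ : ENNReal) ^ 2 :=
  stmt_5_general n U hU K hK hKU
end

section
/- Let E be a complete normed complex vector space, let D ⊆ ℂ be open and preconnected, and let f : ℂ → E be analytic at every point of D. Let Y be a ℂ-submodule of E. If some point z₀ ∈ D is an accumulation point of the set {z ∈ D : f z ∈ Y} (i.e., z₀ lies in the closure of {z ∈ D : f z ∈ Y} \ {z₀}), then f z lies in the topological closure of Y for every z ∈ D. -/
/-- A continuous linear functional whose real part is bounded above on a submodule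
vanishes on that submodule. -/
lemma aux_vanish {E : Type*} [NormedAddCommGroup E] [NormedSpace ℂ E]
    (S : Submodule ℂ E) (φ : E →L[ℂ] ℂ) (u : ℝ)
    (h : ∀ a ∈ (S : Set E), Complex.re (φ a) < u) :
    ∀ a ∈ S, φ a = 0 := by
  intro a ha
  by_contra hne
  have key : ∀ t : ℝ, t * Complex.normSq (φ a) < u := by
    intro t
    have hmem : ((t : ℂ) * starRingEnd ℂ (φ a)) • a ∈ S := S.smul_mem _ ha
    have := h _ hmem
    rw [map_smul, smul_eq_mul, mul_assoc, mul_comm (starRingEnd ℂ (φ a)),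
      Complex.mul_conj] at this
    simpa using this
  have hpos : 0 < Complex.normSq (φ a) := Complex.normSq_pos.2 hne
  have := key ((u + 1) / Complex.normSq (φ a))
  rw [div_mul_cancel₀ _ (ne_of_gt hpos)] at this
  linarith

/-- Identity-theorem corollary: if `f : ℂ → E` is analytic on an open preconnected
set `D`, `Y` is a submodule of `E`, and the set `{z ∈ D | f z ∈ Y}` accumulates at
some point `z₀ ∈ D`, then `f` maps all of `D` into the topological closure of `Y`. -/
theorem stmt_6 {E : Type*} [NormedAddCommGroup E] [NormedSpace ℂ E] [CompleteSpace E]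
    (D : Set ℂ) (hDo : IsOpen D) (hDc : IsPreconnected D)
    (f : ℂ → E) (hf : AnalyticOnNhd ℂ f D)
    (Y : Submodule ℂ E) (z₀ : ℂ) (hz₀ : z₀ ∈ D)
    (hacc : z₀ ∈ closure ({z ∈ D | f z ∈ Y} \ {z₀})) :
    ∀ z ∈ D, f z ∈ Y.topologicalClosure := by
  intro z hz
  by_contra hmem
  obtain ⟨φ, u, hφs, hφx⟩ := RCLike.geometric_hahn_banach_closed_point (𝕜 := ℂ)
    ((Y.topologicalClosure.restrictScalars ℝ).convex) Y.isClosed_topologicalClosure (by exact_mod_cast hmem)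
  have hvan : ∀ a ∈ Y.topologicalClosure, φ a = 0 := aux_vanish _ φ u hφs
  -- φ ∘ f is analytic on D
  have hg : AnalyticOnNhd ℂ (fun w => φ (f w)) D := fun w hw => (φ.analyticAt _).comp (hf w hw)
  have hsub : ({z ∈ D | f z ∈ Y} \ {z₀}) ⊆ ({w | φ (f w) = 0} \ {z₀}) := by
    rintro w ⟨⟨hwD, hwY⟩, hne⟩
    exact ⟨hvan _ (Y.le_topologicalClosure hwY), hne⟩
  have hacc' : z₀ ∈ closure ({w | φ (f w) = 0} \ {z₀}) :=
    closure_mono hsub hacc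
  have heq : Set.EqOn (fun w => φ (f w)) 0 D :=
    hg.eqOn_zero_of_preconnected_of_mem_closure hDc hz₀ hacc'
  have h0 : φ (f z) = 0 := heq hz
  have : Complex.re (φ (f z)) = 0 := by rw [h0]; simp
  have h0' : Complex.re (φ 0) < u := by
    have := hφs 0 (Submodule.zero_mem _)
    simpa using this
  simp only [RCLike.re_to_complex] at hφx
  simp at h0'
  linarith
end

section
/- Let E be a complex Banach space and let ρ : ℂ → (E →L[ℂ] E) be analytic at every point of D^× = {z ∈ ℂ : 0 < |z| < 1} and satisfy ρ(z·w) = ρ(z) ∘ ρ(w) for all z, w ∈ D^×. Fix k ∈ ℤ, t ∈ (0,1), x ∈ E and set l_k x := (2πi)⁻¹ ∮_{|z|=t} z^{−k−1} (ρ(z) x) dz. Then for every q ∈ D^× one has ρ(q)(l_k x) = q^k • (l_k x); that is, l_k x lies in the k-th weight space of ρ. -/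
/-!
Since `ρ q ∘ ρ z = ρ (q z)` on the circle `|z| = t`, applying `ρ q` to the integral and
substituting `w = q z` turns it into `q ^ k` times the same integral over the circle
`|w| = |q| t`. The integrand `w ^ (-k-1) • ρ w x` is holomorphic on the annulus
`|q| t ≤ |w| ≤ t`, so by Cauchy's theorem that integral equals the one over `|w| = t`.
-/

open Complex Metric Set Real

theorem ContinuousLinearMap.circleIntegral_comp_comm {E F : Type*} [NormedAddCommGroup E]
    [NormedSpace ℂ E] [CompleteSpace E] [NormedAddCommGroup F] [NormedSpace ℂ F]
    [CompleteSpace F] (L : E →L[ℂ] F) {f : ℂ → E} {c : ℂ} {R : ℝ}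
    (hf : CircleIntegrable f c R) :
    L (∮ z in C(c, R), f z) = ∮ z in C(c, R), L (f z) := by
  simp only [circleIntegral, ← L.intervalIntegral_comp_comm hf.out, map_smul]

theorem mul_circleMap_zero (q : ℂ) (R θ : ℝ) :
    q * circleMap 0 R θ = circleMap 0 (‖q‖ * R) (θ + q.arg) := by
  simp only [circleMap_zero, ofReal_mul, ofReal_add, add_mul, Complex.exp_add]
  conv_lhs => rw [← norm_mul_exp_arg_mul_I q]
  ring

theorem circleIntegral_comp_mul_left {E : Type*} [NormedAddCommGroup E] [NormedSpace ℂ E]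
    {q : ℂ} (hq : q ≠ 0) (f : ℂ → E) (R : ℝ) :
    ∮ z in C(0, R), f (q * z) = q⁻¹ • ∮ z in C(0, ‖q‖ * R), f z := by
  set g := fun θ => deriv (circleMap 0 (‖q‖ * R)) θ • f (circleMap 0 (‖q‖ * R) θ)
  have hper : Function.Periodic g (2 * π) := fun θ => by
    simp only [g, deriv_circleMap, periodic_circleMap 0 _ θ]
  have hshift : ∫ θ in 0..2 * π, g (θ + q.arg) = ∫ θ in 0..2 * π, g θ := by
    rw [intervalIntegral.integral_comp_add_right, zero_add, add_comm (2 * π),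
      hper.intervalIntegral_add_eq q.arg 0, zero_add]
  rw [circleIntegral, circleIntegral, ← hshift, ← intervalIntegral.integral_smul]
  refine intervalIntegral.integral_congr fun θ _ => ?_
  simp only [g, deriv_circleMap, ← mul_circleMap_zero, smul_smul]
  congr 1
  field_simp

theorem circleIntegral_zpow_smul_comp_mul_left {E : Type*} [NormedAddCommGroup E]
    [NormedSpace ℂ E] {q : ℂ} (hq : q ≠ 0) (n : ℤ) (g : ℂ → E) (R : ℝ) :
    ∮ z in C(0, R), z ^ n • g (q * z) = q ^ (-n - 1) • ∮ z in C(0, ‖q‖ * R), z ^ n • g z := by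
  calc ∮ z in C(0, R), z ^ n • g (q * z)
      = ∮ z in C(0, R), q ^ (-n) • ((q * z) ^ n • g (q * z)) := by
        congr 1 with z
        rw [smul_smul, mul_zpow, ← mul_assoc, ← zpow_add₀ hq, neg_add_cancel, zpow_zero, one_mul]
    _ = q ^ (-n - 1) • ∮ z in C(0, ‖q‖ * R), z ^ n • g z := by
        rw [circleIntegral.integral_smul, circleIntegral_comp_mul_left hq (fun w => w ^ n • g w),
          smul_smul, zpow_sub_one₀ hq]

theorem circleIntegral_eq_of_differentiableOn_annulus {E : Type*} [NormedAddCommGroup E]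
    [NormedSpace ℂ E] [CompleteSpace E] {f : ℂ → E} {c : ℂ} {r R : ℝ} (hr : 0 < r)
    (hrR : r ≤ R) (hf : DifferentiableOn ℂ f (closedBall c R \ ball c r)) :
    ∮ z in C(c, r), f z = ∮ z in C(c, R), f z := by
  have hopen : DifferentiableOn ℂ f (ball c R \ closedBall c r) :=
    hf.mono (sdiff_subset_sdiff ball_subset_closedBall ball_subset_closedBall)
  refine (circleIntegral_eq_of_differentiable_on_annulus_off_countable hr hrR countable_empty
    hf.continuousOn fun z hz => hopen.differentiableAt ?_).symm
  exact (isOpen_ball.sdiff isClosed_closedBall).mem_nhds hz.1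

/-- If `ρ : ℂ → (E →L[ℂ] E)` is analytic on the punctured unit disc `D^×` and
multiplicative there, then for `k ∈ ℤ`, `t ∈ (0,1)`, `x ∈ E`, the element
`l_k x = (2πi)⁻¹ ∮_{|z|=t} z^{-k-1} (ρ z x) dz` lies in the `k`-th weight
space: `ρ q (l_k x) = q^k • l_k x` for all `q ∈ D^×`. -/
theorem stmt_7 {E : Type*} [NormedAddCommGroup E] [NormedSpace ℂ E] [CompleteSpace E]
    (ρ : ℂ → E →L[ℂ] E)
    (hρ : ∀ z : ℂ, 0 < ‖z‖ → ‖z‖ < 1 → AnalyticAt ℂ ρ z)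
    (hmul : ∀ z w : ℂ, 0 < ‖z‖ → ‖z‖ < 1 →
      0 < ‖w‖ → ‖w‖ < 1 → ρ (z * w) = (ρ z).comp (ρ w))
    (k : ℤ) (t : ℝ) (ht : t ∈ Set.Ioo (0 : ℝ) 1) (x : E)
    (q : ℂ) (hq0 : 0 < ‖q‖) (hq1 : ‖q‖ < 1) :
    ρ q ((2 * (Real.pi : ℂ) * Complex.I)⁻¹ • ∮ z in C(0, t), z ^ (-k - 1) • ρ z x)
      = q ^ k •
        ((2 * (Real.pi : ℂ) * Complex.I)⁻¹ • ∮ z in C(0, t), z ^ (-k - 1) • ρ z x) := by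
  have hq : q ≠ 0 := norm_pos_iff.mp hq0
  have hdiff : DifferentiableOn ℂ (fun z => z ^ (-k - 1) • ρ z x) {z | 0 < ‖z‖ ∧ ‖z‖ < 1} :=
    fun z ⟨hz0, hz1⟩ => ((differentiableAt_zpow.mpr (.inl (norm_pos_iff.mp hz0))).smul
      ((hρ z hz0 hz1).differentiableAt.clm_apply (differentiableAt_const x))).differentiableWithinAt
  have hsphere : sphere (0 : ℂ) t ⊆ {z | 0 < ‖z‖ ∧ ‖z‖ < 1} := fun z hz => by
    rw [mem_sphere_zero_iff_norm] at hz
    exact ⟨hz ▸ ht.1, hz ▸ ht.2⟩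
  have hannulus : closedBall (0 : ℂ) t \ ball 0 (‖q‖ * t) ⊆ {z | 0 < ‖z‖ ∧ ‖z‖ < 1} :=
    fun z ⟨hzt, hzs⟩ => by
      simp only [mem_closedBall_zero_iff, mem_ball_zero_iff, not_lt] at hzt hzs
      exact ⟨(mul_pos hq0 ht.1).trans_le hzs, hzt.trans_lt ht.2⟩
  have hcomm : ρ q (∮ z in C(0, t), z ^ (-k - 1) • ρ z x)
      = ∮ z in C(0, t), z ^ (-k - 1) • ρ (q * z) x := by
    rw [(ρ q).circleIntegral_comp_comm ((hdiff.continuousOn.mono hsphere).circleIntegrable ht.1.le)]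
    refine circleIntegral.integral_congr ht.1.le fun z hz => ?_
    obtain ⟨hz0, hz1⟩ := hsphere hz
    simp only [map_smul, hmul q z hq0 hq1 hz0 hz1, ContinuousLinearMap.comp_apply]
  rw [map_smul, hcomm, circleIntegral_zpow_smul_comp_mul_left hq _ (fun w => ρ w x),
    circleIntegral_eq_of_differentiableOn_annulus (mul_pos hq0 ht.1)
      (mul_le_of_le_one_left ht.1.le hq1.le) (hdiff.mono hannulus),
    show -(-k - 1) - 1 = k by ring, smul_comm]
end

section
/- With the data of a ℂˣ-invariant precosheaf on discs centered at 0 (as in the context) and a group homomorphism χ : ℂˣ → ℂˣ, for all real numbers 0 < r ≤ R the extension map i_{r,R} sends the weight space F(r)_χ into the weight space F(R)_χ, and the induced ℂ-linear map F(r)_χ → F(R)_χ is bijective (a linear isomorphism). -/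
/-!
The maps `shrink q r s = i_{|q| r, s} ∘ σ_q : F(r) → F(s)` compose like the commutative group `ℂˣ`
and commute with the extension maps. Choosing `p` with `|p| < 1` and `|p| R ≤ r`, the map
`χ(p)⁻¹ • shrink p R r : F(R) → F(r)` therefore preserves weight spaces, and on them it is inverse
to `i_{r,R}`: both composites are `χ(p)⁻¹ • shrink p`, which is the identity on a weight space.
-/

open Set

namespace DiscPrecosheaf

variable {F : ℝ → Type*} [∀ r, AddCommGroup (F r)] [∀ r, Module ℂ (F r)]
  (i : ∀ r R : ℝ, F r →ₗ[ℂ] F R) (σ : ∀ (q : ℂˣ) (r : ℝ), F r →ₗ[ℂ] F (‖(q : ℂ)‖ * r))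

def ExtensionTrans : Prop :=
  ∀ r R S : ℝ, 0 < r → r ≤ R → R ≤ S → ∀ x : F r, i R S (i r R x) = i r S x

def ActionMul : Prop :=
  ∀ (q q' : ℂˣ) (r : ℝ), 0 < r → ∀ x : F r, σ q' (‖(q : ℂ)‖ * r) (σ q r x) ≍ σ (q' * q) r x

def ActionExtComm : Prop :=
  ∀ (q : ℂˣ) (r R : ℝ), 0 < r → r ≤ R → ∀ x : F r,
    σ q R (i r R x) = i (‖(q : ℂ)‖ * r) (‖(q : ℂ)‖ * R) (σ q r x)

noncomputable def shrink (q : ℂˣ) (r s : ℝ) : F r →ₗ[ℂ] F s :=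
  i (‖(q : ℂ)‖ * r) s ∘ₗ σ q r

noncomputable def weightSpace (χ : ℂˣ →* ℂˣ) (r : ℝ) : Submodule ℂ (F r) where
  carrier := {x | ∀ q : ℂˣ, ‖(q : ℂ)‖ < 1 → shrink i σ q r r x = (χ q : ℂ) • x}
  add_mem' hx hy q hq := by rw [map_add, hx q hq, hy q hq, smul_add]
  zero_mem' q _ := by rw [map_zero, smul_zero]
  smul_mem' c x hx q hq := by rw [map_smul, hx q hq, smul_comm]

variable {i σ}

theorem ext_congr_heq {a b : ℝ} (t : ℝ) (hab : a = b) {x : F a} {y : F b} (hxy : x ≍ y) :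
    i a t x = i b t y :=
  congr_heq (congr_arg_heq (fun a ↦ ⇑(i a t)) hab) hxy

theorem norm_mul_pos (q : ℂˣ) {r : ℝ} (hr : 0 < r) : 0 < ‖(q : ℂ)‖ * r :=
  mul_pos (norm_pos_iff.mpr q.ne_zero) hr

theorem ext_shrink (hi : ExtensionTrans i) {q : ℂˣ} {r s t : ℝ} (hr : 0 < r)
    (hs : ‖(q : ℂ)‖ * r ≤ s) (hst : s ≤ t) (x : F r) :
    i s t (shrink i σ q r s x) = shrink i σ q r t x :=
  hi _ s t (norm_mul_pos q hr) hs hst _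

theorem shrink_ext (hi : ExtensionTrans i) (hiσ : ActionExtComm i σ) {q : ℂˣ} {r R s : ℝ}
    (hr : 0 < r) (hrR : r ≤ R) (hs : ‖(q : ℂ)‖ * R ≤ s) (x : F r) :
    shrink i σ q R s (i r R x) = shrink i σ q r s x := by
  have hqr : ‖(q : ℂ)‖ * r ≤ ‖(q : ℂ)‖ * R := by gcongr
  simp only [shrink, LinearMap.comp_apply]
  rw [hiσ q r R hr hrR, hi _ _ s (norm_mul_pos q hr) hqr hs]

theorem shrink_shrink (hi : ExtensionTrans i) (hσ : ActionMul σ) (hiσ : ActionExtComm i σ)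
    {q q' : ℂˣ} {r s t : ℝ} (hr : 0 < r) (hs : ‖(q : ℂ)‖ * r ≤ s)
    (ht : ‖(q' : ℂ)‖ * s ≤ t) (x : F r) :
    shrink i σ q' s t (shrink i σ q r s x) = shrink i σ (q' * q) r t x := by
  have hqr := norm_mul_pos q hr
  have hq'qr : ‖(q' : ℂ)‖ * (‖(q : ℂ)‖ * r) ≤ ‖(q' : ℂ)‖ * s := by gcongr
  simp only [shrink, LinearMap.comp_apply]
  rw [hiσ q' _ s hqr hs, hi _ _ t (norm_mul_pos q' hqr) hq'qr ht]
  exact ext_congr_heq t (by rw [Units.val_mul, norm_mul, mul_assoc]) (hσ q q' r hr x)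

theorem ext_shrink_comm (hi : ExtensionTrans i) (hiσ : ActionExtComm i σ) {q : ℂˣ}
    (hq : ‖(q : ℂ)‖ ≤ 1) {r R : ℝ} (hr : 0 < r) (hrR : r ≤ R) (x : F r) :
    i r R (shrink i σ q r r x) = shrink i σ q R R (i r R x) := by
  rw [ext_shrink hi hr (mul_le_of_le_one_left hr.le hq) hrR,
    shrink_ext hi hiσ hr hrR (mul_le_of_le_one_left (hr.le.trans hrR) hq)]

theorem shrink_comm (hi : ExtensionTrans i) (hσ : ActionMul σ) (hiσ : ActionExtComm i σ)
    {p q : ℂˣ} {R r : ℝ} (hR : 0 < R) (hpR : ‖(p : ℂ)‖ * R ≤ r) (hq : ‖(q : ℂ)‖ ≤ 1)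
    (y : F R) :
    shrink i σ p R r (shrink i σ q R R y) = shrink i σ q r r (shrink i σ p R r y) := by
  have hr : 0 ≤ r := (norm_mul_pos p hR).le.trans hpR
  rw [shrink_shrink hi hσ hiσ hR (mul_le_of_le_one_left hR.le hq) hpR,
    shrink_shrink hi hσ hiσ hR hpR (mul_le_of_le_one_left hr hq), mul_comm]

theorem mapsTo_weightSpace (χ : ℂˣ →* ℂˣ) {r s : ℝ} (f : F r →ₗ[ℂ] F s)
    (hf : ∀ q : ℂˣ, ‖(q : ℂ)‖ < 1 → ∀ x, f (shrink i σ q r r x) = shrink i σ q s s (f x)) :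
    MapsTo f (weightSpace i σ χ r) (weightSpace i σ χ s) :=
  fun x hx q hq ↦ by rw [← hf q hq, hx q hq, map_smul]

theorem mapsTo_ext (hi : ExtensionTrans i) (hiσ : ActionExtComm i σ) (χ : ℂˣ →* ℂˣ)
    {r R : ℝ} (hr : 0 < r) (hrR : r ≤ R) :
    MapsTo (i r R) (weightSpace i σ χ r) (weightSpace i σ χ R) :=
  mapsTo_weightSpace χ _ fun _ hq ↦ ext_shrink_comm hi hiσ hq.le hr hrR

theorem mapsTo_smul_shrink (hi : ExtensionTrans i) (hσ : ActionMul σ)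
    (hiσ : ActionExtComm i σ) (χ : ℂˣ →* ℂˣ) (c : ℂ) {p : ℂˣ} {R r : ℝ} (hR : 0 < R)
    (hpR : ‖(p : ℂ)‖ * R ≤ r) :
    MapsTo (c • shrink i σ p R r) (weightSpace i σ χ R) (weightSpace i σ χ r) :=
  mapsTo_weightSpace χ _ fun _ hq y ↦ by
    simp only [LinearMap.smul_apply, map_smul, shrink_comm hi hσ hiσ hR hpR hq.le]

theorem invOn_inv_smul_shrink (hi : ExtensionTrans i) (hiσ : ActionExtComm i σ)
    (χ : ℂˣ →* ℂˣ) {p : ℂˣ} (hp : ‖(p : ℂ)‖ < 1) {r R : ℝ} (hr : 0 < r) (hrR : r ≤ R)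
    (hpR : ‖(p : ℂ)‖ * R ≤ r) :
    InvOn ((χ p : ℂ)⁻¹ • shrink i σ p R r) (i r R)
      (weightSpace i σ χ r) (weightSpace i σ χ R) := by
  have hχp : (χ p : ℂ) ≠ 0 := (χ p).ne_zero
  constructor
  · intro x hx
    rw [LinearMap.smul_apply, shrink_ext hi hiσ hr hrR hpR, hx p hp, inv_smul_smul₀ hχp]
  · intro y hy
    rw [LinearMap.smul_apply, map_smul, ext_shrink hi (hr.trans_le hrR) hpR hrR, hy p hp,
      inv_smul_smul₀ hχp]

end DiscPrecosheaf

theorem exists_norm_lt_one_mul_le {r R : ℝ} (hr : 0 < r) (hR : 0 < R) :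
    ∃ p : ℂˣ, ‖(p : ℂ)‖ < 1 ∧ ‖(p : ℂ)‖ * R ≤ r := by
  have ht : 0 < r / (r + R) := by positivity
  refine ⟨Units.mk0 ((r / (r + R) : ℝ) : ℂ) (by exact_mod_cast ht.ne'), ?_⟩
  rw [Units.val_mk0, Complex.norm_real, Real.norm_of_nonneg ht.le]
  constructor
  · rw [div_lt_one (by positivity)]
    linarith
  · rw [div_mul_eq_mul_div, div_le_iff₀ (by positivity)]
    nlinarith

theorem stmt_12_general (F : ℝ → Type*) [∀ r, AddCommGroup (F r)] [∀ r, Module ℂ (F r)]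
    (i : ∀ r R : ℝ, F r →ₗ[ℂ] F R)
    (σ : ∀ (q : ℂˣ) (r : ℝ), F r →ₗ[ℂ] F (‖(q : ℂ)‖ * r))
    (hi_comp : ∀ r R S : ℝ, 0 < r → r ≤ R → R ≤ S → ∀ x : F r,
      i R S (i r R x) = i r S x)
    (hσ_comp : ∀ (q q' : ℂˣ) (r : ℝ), 0 < r → ∀ x : F r,
      HEq (σ q' (‖(q : ℂ)‖ * r) (σ q r x)) (σ (q' * q) r x))
    (hinv : ∀ (q : ℂˣ) (r R : ℝ), 0 < r → r ≤ R → ∀ x : F r,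
      σ q R (i r R x)
        = i (‖(q : ℂ)‖ * r) (‖(q : ℂ)‖ * R) (σ q r x))
    (χ : ℂˣ →* ℂˣ) (r R : ℝ) (hr : 0 < r) (hrR : r ≤ R) :
    Set.BijOn (i r R)
      {x : F r | ∀ q : ℂˣ, ‖(q : ℂ)‖ < 1 →
        i (‖(q : ℂ)‖ * r) r (σ q r x) = ((χ q : ℂ)) • x}
      {x : F R | ∀ q : ℂˣ, ‖(q : ℂ)‖ < 1 →
        i (‖(q : ℂ)‖ * R) R (σ q R x) = ((χ q : ℂ)) • x} := by
  have hR : 0 < R := hr.trans_le hrR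
  obtain ⟨p, hp, hpR⟩ := exists_norm_lt_one_mul_le hr hR
  open DiscPrecosheaf in
  exact (invOn_inv_smul_shrink hi_comp hinv χ hp hr hrR hpR).bijOn
    (mapsTo_ext hi_comp hinv χ hr hrR) (mapsTo_smul_shrink hi_comp hσ_comp hinv χ _ hR hpR)

/-- Given a `ℂˣ`-invariant precosheaf on discs centered at `0`: vector spaces `F r`
for radii `r`, extension maps `i r R : F r →ₗ[ℂ] F R`, and action maps
`σ q r : F r →ₗ[ℂ] F (|q| * r)` satisfying the precosheaf and invariance laws
(the heterogeneously-typed laws are stated via `HEq`), and a character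
`χ : ℂˣ →* ℂˣ`, the extension map `i r R` for `0 < r ≤ R` maps the weight space
`F(r)_χ` into `F(R)_χ` and induces a bijection between them. -/
theorem stmt_12 (F : ℝ → Type*) [∀ r, AddCommGroup (F r)] [∀ r, Module ℂ (F r)]
    (i : ∀ r R : ℝ, F r →ₗ[ℂ] F R)
    (σ : ∀ (q : ℂˣ) (r : ℝ), F r →ₗ[ℂ] F (‖(q : ℂ)‖ * r))
    (hi_id : ∀ r : ℝ, 0 < r → ∀ x : F r, i r r x = x)
    (hi_comp : ∀ r R S : ℝ, 0 < r → r ≤ R → R ≤ S → ∀ x : F r,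
      i R S (i r R x) = i r S x)
    (hσ_id : ∀ r : ℝ, 0 < r → ∀ x : F r, HEq (σ 1 r x) x)
    (hσ_comp : ∀ (q q' : ℂˣ) (r : ℝ), 0 < r → ∀ x : F r,
      HEq (σ q' (‖(q : ℂ)‖ * r) (σ q r x)) (σ (q' * q) r x))
    (hinv : ∀ (q : ℂˣ) (r R : ℝ), 0 < r → r ≤ R → ∀ x : F r,
      σ q R (i r R x)
        = i (‖(q : ℂ)‖ * r) (‖(q : ℂ)‖ * R) (σ q r x))
    (χ : ℂˣ →* ℂˣ) (r R : ℝ) (hr : 0 < r) (hrR : r ≤ R) :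
    Set.BijOn (i r R)
      {x : F r | ∀ q : ℂˣ, ‖(q : ℂ)‖ < 1 →
        i (‖(q : ℂ)‖ * r) r (σ q r x) = ((χ q : ℂ)) • x}
      {x : F R | ∀ q : ℂˣ, ‖(q : ℂ)‖ < 1 →
        i (‖(q : ℂ)‖ * R) R (σ q R x) = ((χ q : ℂ)) • x} :=
  stmt_12_general F i σ hi_comp hσ_comp hinv χ r R hr hrR
end
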